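/- For every integer n \ge 2 and every real t with 0 < t < 1/2, the double inequality 2(2n+1)|B_{2n}| < |B_{2n+1}(t)| / (t(1/2 - t)(1 - t)) < 4(1 - 2^{1-2n})(2n+1)|B_{2n}| holds, where B_{2n} = B_{2n}(0) is the 2n-th Bernoulli number. -/

import Mathlib

/-!
Since `B₃(t) = t (1/2 - t) (1 - t)`, each bound says that `F = ±(s B_{2n+1} - K B₃)`, with
`s = (-1)^(n+1)`, is positive on `(0, 1/2)`, where `K` is the limit of `|B_{2n+1}| / B₃` at `0`
(lower bound) or at `1/2` (upper bound). `F` vanishes at both ends and, by the choice of `K`, so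
does `F'` at the corresponding end. The fourth derivative of `F` is a multiple of `s B_{2n-3}`,
which has constant sign on `(0, 1/2)` (`(-1)^(k+1) B_{2k+1}` is strictly concave there and vanishes
at the ends). So `F''` is strictly convex or concave, its endpoint values make it change sign
exactly once, `F` is convex and then concave (or the reverse), and the endpoint data force `F > 0`.
The size of the Bernoulli numbers enters only through the sign of `F'''(1/2)`, which needs
`24 |B_{2n}| < 2n (2n-1) (1 - 2^{3-2n}) |B_{2n-2}|`; this follows from
`|B_{2k}| = 2 (2k)! ζ(2k) / (2π)^{2k}`.
-/

open Set Real Filter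

noncomputable def B (n : ℕ) (t : ℝ) : ℝ := Polynomial.aeval t (Polynomial.bernoulli n)

noncomputable def Bnum (n : ℕ) : ℝ := ((bernoulli n : ℚ) : ℝ)

open scoped Nat

section Convexity

variable {f g : ℝ → ℝ} {a b c x : ℝ}

lemma StrictConcaveOn.pos_of_mem_Ioo (hf : StrictConcaveOn ℝ (Icc a b) f) (ha : 0 ≤ f a)
    (hb : 0 ≤ f b) (hx : x ∈ Ioo a b) : 0 < f x := by
  have hab := hx.1.trans hx.2
  calc 0 ≤ min (f a) (f b) := le_min ha hb
    _ < f x := hf.lt_on_openSegment (left_mem_Icc.2 hab.le) (right_mem_Icc.2 hab.le) hab.ne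
        (by rwa [openSegment_eq_Ioo hab])

lemma StrictConvexOn.pos_of_deriv_left_eq_zero (hf : StrictConvexOn ℝ (Icc a b) f)
    (hd : DifferentiableAt ℝ f a) (ha : f a = 0) (h'a : deriv f a = 0) (hx : x ∈ Ioc a b) :
    0 < f x := by
  have := hf.deriv_lt_slope (left_mem_Icc.2 (hx.1.trans_le hx.2).le) ⟨hx.1.le, hx.2⟩ hx.1 hd
  rwa [h'a, slope_def_field, ha, sub_zero, div_pos_iff_of_pos_right (sub_pos.2 hx.1)] at this

lemma StrictConvexOn.pos_of_deriv_right_eq_zero (hf : StrictConvexOn ℝ (Icc a b) f)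
    (hd : DifferentiableAt ℝ f b) (hb : f b = 0) (h'b : deriv f b = 0) (hx : x ∈ Ico a b) :
    0 < f x := by
  have := hf.slope_lt_deriv ⟨hx.1, hx.2.le⟩ (right_mem_Icc.2 (hx.1.trans_lt hx.2).le) hx.2 hd
  rwa [h'b, slope_def_field, hb, zero_sub, neg_div, neg_lt_zero,
    div_pos_iff_of_pos_right (sub_pos.2 hx.2)] at this

lemma strictConvexOn_Icc_of_iteratedDeriv_two_pos (hf : Continuous f)
    (h : ∀ x ∈ Ioo a b, 0 < iteratedDeriv 2 f x) : StrictConvexOn ℝ (Icc a b) f :=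
  strictConvexOn_of_deriv2_pos (convex_Icc a b) hf.continuousOn <| by
    simpa only [interior_Icc, iteratedDeriv_eq_iterate] using h

lemma strictConcaveOn_Icc_of_iteratedDeriv_two_neg (hf : Continuous f)
    (h : ∀ x ∈ Ioo a b, iteratedDeriv 2 f x < 0) : StrictConcaveOn ℝ (Icc a b) f :=
  strictConcaveOn_of_deriv2_neg (convex_Icc a b) hf.continuousOn <| by
    simpa only [interior_Icc, iteratedDeriv_eq_iterate] using h

/-- The minimum of `g` lies at the zero `d` of `g'`, and it is negative because `g b = 0`. -/
lemma StrictConvexOn.exists_sign_change (hab : a < b) (hg : ContDiff ℝ 1 g)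
    (hconv : StrictConvexOn ℝ (Icc a b) g) (h'a : deriv g a < 0) (h'b : 0 < deriv g b)
    (ha : 0 < g a) (hb : g b = 0) :
    ∃ c ∈ Ioo a b, (∀ x ∈ Ioo a c, 0 < g x) ∧ ∀ x ∈ Ioo c b, g x < 0 := by
  obtain ⟨d, hd, h'd⟩ : ∃ d ∈ Ioo a b, deriv g d = 0 :=
    intermediate_value_Ioo hab.le (hg.continuous_deriv le_rfl).continuousOn ⟨h'a, h'b⟩
  have hgd : g d < 0 := by
    have := hconv.deriv_lt_slope (Ioo_subset_Icc_self hd) (right_mem_Icc.2 hab.le) hd.2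
      (hg.differentiable one_ne_zero d)
    rwa [h'd, slope_def_field, hb, zero_sub, neg_div, neg_pos,
      div_lt_iff₀ (sub_pos.2 hd.2), zero_mul] at this
  obtain ⟨c, hc, hc0⟩ : ∃ c ∈ Ioo a d, g c = 0 :=
    intermediate_value_Ioo' hd.1.le hg.continuous.continuousOn ⟨hgd, ha⟩
  refine ⟨c, ⟨hc.1, hc.2.trans hd.2⟩, fun x hx => ?_, fun x hx => ?_⟩
  · have hxd : x < d := hx.2.trans hc.2
    have := hconv.lt_on_openSegment ⟨hx.1.le, hxd.le.trans hd.2.le⟩ (Ioo_subset_Icc_self hd)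
      hxd.ne (by rw [openSegment_eq_Ioo hxd]; exact ⟨hx.2, hc.2⟩)
    rw [hc0] at this
    exact (lt_max_iff.1 this).resolve_right hgd.not_gt
  · have hcb : c < b := hx.1.trans hx.2
    have := hconv.lt_on_openSegment ⟨hc.1.le, hcb.le⟩ (right_mem_Icc.2 hab.le) hcb.ne
      (by rwa [openSegment_eq_Ioo hcb])
    rwa [hc0, hb, max_self] at this

lemma pos_of_strictConvexOn_of_strictConcaveOn (hac : a < c)
    (hconv : StrictConvexOn ℝ (Icc a c) f) (hconc : StrictConcaveOn ℝ (Icc c b) f)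
    (hd : DifferentiableAt ℝ f a) (ha : f a = 0) (h'a : deriv f a = 0) (hb : f b = 0)
    (hx : x ∈ Ioo a b) : 0 < f x := by
  rcases le_or_gt x c with hxc | hcx
  · exact hconv.pos_of_deriv_left_eq_zero hd ha h'a ⟨hx.1, hxc⟩
  · exact hconc.pos_of_mem_Ioo (hconv.pos_of_deriv_left_eq_zero hd ha h'a ⟨hac, le_rfl⟩).le
      hb.ge ⟨hcx, hx.2⟩

lemma pos_of_strictConcaveOn_of_strictConvexOn (hcb : c < b)
    (hconc : StrictConcaveOn ℝ (Icc a c) f) (hconv : StrictConvexOn ℝ (Icc c b) f)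
    (hd : DifferentiableAt ℝ f b) (ha : f a = 0) (hb : f b = 0) (h'b : deriv f b = 0)
    (hx : x ∈ Ioo a b) : 0 < f x := by
  rcases le_or_gt c x with hcx | hxc
  · exact hconv.pos_of_deriv_right_eq_zero hd hb h'b ⟨hcx, hx.2⟩
  · exact hconc.pos_of_mem_Ioo ha.ge
      (hconv.pos_of_deriv_right_eq_zero hd hb h'b ⟨le_rfl, hcb⟩).le ⟨hx.1, hxc⟩

lemma exists_sign_change_iteratedDeriv_two (hf : ContDiff ℝ 4 f) (hab : a < b)
    (h4 : ∀ x ∈ Ioo a b, 0 < iteratedDeriv 4 f x)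
    (h3a : iteratedDeriv 3 f a < 0) (h3b : 0 < iteratedDeriv 3 f b)
    (h2a : 0 < iteratedDeriv 2 f a) (h2b : iteratedDeriv 2 f b = 0) :
    ∃ c ∈ Ioo a b, (∀ x ∈ Ioo a c, 0 < iteratedDeriv 2 f x) ∧
      ∀ x ∈ Ioo c b, iteratedDeriv 2 f x < 0 := by
  have hg : ContDiff ℝ 2 (iteratedDeriv 2 f) := by
    rw [iteratedDeriv_eq_iterate]; exact hf.iterate_deriv' 2 2
  refine StrictConvexOn.exists_sign_change hab (hg.of_le (by norm_num))
    (strictConvexOn_Icc_of_iteratedDeriv_two_pos hg.continuous fun x hx => ?_)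
    (by rwa [← iteratedDeriv_succ]) (by rwa [← iteratedDeriv_succ]) h2a h2b
  simpa only [iteratedDeriv_eq_iterate, ← Function.iterate_add_apply] using h4 x hx

lemma pos_of_iteratedDeriv_four_pos (hf : ContDiff ℝ 4 f) (hab : a < b)
    (h4 : ∀ x ∈ Ioo a b, 0 < iteratedDeriv 4 f x)
    (h3a : iteratedDeriv 3 f a < 0) (h3b : 0 < iteratedDeriv 3 f b)
    (h2a : 0 < iteratedDeriv 2 f a) (h2b : iteratedDeriv 2 f b = 0)
    (h1a : deriv f a = 0) (ha : f a = 0) (hb : f b = 0) (hx : x ∈ Ioo a b) : 0 < f x := by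
  obtain ⟨c, hc, hpos, hneg⟩ := exists_sign_change_iteratedDeriv_two hf hab h4 h3a h3b h2a h2b
  exact pos_of_strictConvexOn_of_strictConcaveOn hc.1
    (strictConvexOn_Icc_of_iteratedDeriv_two_pos hf.continuous hpos)
    (strictConcaveOn_Icc_of_iteratedDeriv_two_neg hf.continuous hneg)
    (hf.differentiable (by norm_num) a) ha h1a hb hx

lemma pos_of_iteratedDeriv_four_neg (hf : ContDiff ℝ 4 f) (hab : a < b)
    (h4 : ∀ x ∈ Ioo a b, iteratedDeriv 4 f x < 0)
    (h3a : 0 < iteratedDeriv 3 f a) (h3b : iteratedDeriv 3 f b < 0)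
    (h2a : iteratedDeriv 2 f a < 0) (h2b : iteratedDeriv 2 f b = 0)
    (h1b : deriv f b = 0) (ha : f a = 0) (hb : f b = 0) (hx : x ∈ Ioo a b) : 0 < f x := by
  obtain ⟨c, hc, hneg, hpos⟩ := exists_sign_change_iteratedDeriv_two hf.neg hab
    (by simpa using h4) (by simpa using h3a) (by simpa using h3b) (by simpa using h2a)
    (by simpa using h2b)
  exact pos_of_strictConcaveOn_of_strictConvexOn hc.2
    (strictConcaveOn_Icc_of_iteratedDeriv_two_neg hf.continuous (by simpa using hneg))
    (strictConvexOn_Icc_of_iteratedDeriv_two_pos hf.continuous (by simpa using hpos))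
    (hf.differentiable (by norm_num) b) ha hb h1b hx

end Convexity

lemma bernoulliFun_three (x : ℝ) : bernoulliFun 3 x = x * (1 / 2 - x) * (1 - x) := by
  simp only [bernoulliFun, Polynomial.bernoulli_def, Nat.reduceAdd, Finset.sum_range_succ,
    Finset.range_one, Finset.sum_singleton, tsub_zero, Nat.one_lt_ofNat,
    bernoulli_eq_zero_of_odd (by decide : Odd 3), Nat.choose_zero_right, Nat.cast_one, mul_one,
    Polynomial.monomial_zero_right, Nat.add_one_sub_one, bernoulli_two, Nat.choose_one_right,
    Nat.cast_ofNat, zero_add, Nat.reduceSub, bernoulli_one, Nat.choose_succ_self_right,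
    tsub_self, bernoulli_zero, Nat.choose_self, Polynomial.map_add, Polynomial.map_monomial,
    eq_ratCast, Rat.cast_mul, Rat.cast_inv, Rat.cast_ofNat, Rat.cast_div, Rat.cast_neg,
    Rat.cast_one, Polynomial.eval_add, Polynomial.eval_monomial, pow_one, one_mul, one_div]
  ring

lemma B_eq_bernoulliFun (k : ℕ) : B k = bernoulliFun k := by
  ext x
  rw [B, bernoulliFun, Polynomial.eval_map, Polynomial.aeval_def]

lemma iteratedDeriv_bernoulliFun (k N : ℕ) :
    iteratedDeriv k (bernoulliFun N) =
      fun x => (N.descFactorial k : ℝ) * bernoulliFun (N - k) x := by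
  induction k with
  | zero => simp
  | succ k ih =>
    ext x
    rw [iteratedDeriv_succ, ih, deriv_const_mul_field', deriv_bernoulliFun, Nat.descFactorial_succ,
      Nat.sub_sub]
    push_cast
    ring

lemma iteratedDeriv_const_mul_bernoulliFun_sub (α β : ℝ) (N M k : ℕ) (x : ℝ) :
    iteratedDeriv k (fun y => α * bernoulliFun N y - β * bernoulliFun M y) x =
      α * (N.descFactorial k * bernoulliFun (N - k) x) -
        β * (M.descFactorial k * bernoulliFun (M - k) x) := by
  have hB (L : ℕ) (γ : ℝ) : ContDiffAt ℝ k (fun y => γ * bernoulliFun L y) x :=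
    (contDiff_const.mul ((contDiff_bernoulliFun L).of_le le_top)).contDiffAt
  rw [iteratedDeriv_fun_sub (hB N α) (hB M β)]
  simp [iteratedDeriv_bernoulliFun]

lemma neg_one_pow_mul_bernoulliFun_pos (k : ℕ) {x : ℝ} (hx : x ∈ Ioo 0 2⁻¹) :
    0 < (-1) ^ (k + 1) * bernoulliFun (2 * k + 1) x := by
  induction k generalizing x with
  | zero =>
    simp only [zero_add, pow_one, mul_zero, bernoulliFun_one, neg_one_mul, neg_sub, sub_pos]
    linarith [hx.2]
  | succ k ih =>
    have hconc : StrictConcaveOn ℝ (Icc 0 2⁻¹)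
        (fun y => (-1) ^ (k + 2) * bernoulliFun (2 * k + 3) y) := by
      refine strictConcaveOn_Icc_of_iteratedDeriv_two_neg
        (continuous_const.mul (continuous_bernoulliFun _)) fun y hy => ?_
      have h : iteratedDeriv 2 (fun y => (-1) ^ (k + 2) * bernoulliFun (2 * k + 3) y) y =
          -((2 * k + 3) * (2 * k + 2) * ((-1) ^ (k + 1) * bernoulliFun (2 * k + 1) y)) := by
        simp only [iteratedDeriv_const_mul_field, iteratedDeriv_bernoulliFun,
          Nat.descFactorial_succ, Nat.descFactorial_zero, Nat.sub_zero, Nat.add_one_sub_one,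
          Nat.reduceSubDiff]
        push_cast
        ring
      rw [h, neg_lt_zero]
      exact mul_pos (by positivity) (ih hy)
    refine hconc.pos_of_mem_Ioo ?_ ?_ hx
    · rw [bernoulliFun_eval_zero, bernoulli_eq_zero_of_odd ⟨k + 1, by ring⟩ (by omega)]
      simp
    · rw [show 2 * k + 3 = 2 * (k + 1) + 1 by ring, bernoulliFun_eval_half_eq_zero, mul_zero]

lemma neg_one_pow_mul_bernoulli_eq_tsum {k : ℕ} (hk : k ≠ 0) :
    (-1) ^ (k + 1) * (bernoulli (2 * k) : ℝ) =
      2 * (2 * k)! / (2 * π) ^ (2 * k) * ∑' n : ℕ, 1 / (n : ℝ) ^ (2 * k) := by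
  have h2 : (2 : ℝ) ^ (2 * k) = 2 * 2 ^ (2 * k - 1) := by
    rw [← pow_succ', Nat.sub_add_cancel (by omega)]
  rw [(hasSum_zeta_nat hk).tsum_eq, mul_pow, h2]
  field_simp

lemma one_le_tsum_one_div_nat_pow {p : ℕ} (hp : 1 < p) : 1 ≤ ∑' n : ℕ, 1 / (n : ℝ) ^ p := by
  simpa using (Real.summable_one_div_nat_pow.2 hp).le_tsum 1 fun n _ => by positivity

lemma tsum_one_div_nat_pow_le {p q : ℕ} (hp : 1 < p) (hpq : p ≤ q) :
    ∑' n : ℕ, 1 / (n : ℝ) ^ q ≤ ∑' n : ℕ, 1 / (n : ℝ) ^ p := by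
  refine Summable.tsum_le_tsum (fun n => ?_) (Real.summable_one_div_nat_pow.2 (hp.trans_le hpq))
    (Real.summable_one_div_nat_pow.2 hp)
  rcases n.eq_zero_or_pos with rfl | hn
  · simp [zero_pow (by omega : q ≠ 0), zero_pow (by omega : p ≠ 0)]
  · exact one_div_pow_le_one_div_pow_of_le (by exact_mod_cast hn) hpq

lemma neg_one_pow_mul_bernoulli_pos {k : ℕ} (hk : k ≠ 0) :
    0 < (-1) ^ (k + 1) * (bernoulli (2 * k) : ℝ) := by
  rw [neg_one_pow_mul_bernoulli_eq_tsum hk]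
  have := one_le_tsum_one_div_nat_pow (p := 2 * k) (by omega)
  have := pi_pos
  positivity

lemma abs_bernoulli_two_mul {k : ℕ} (hk : k ≠ 0) :
    |(bernoulli (2 * k) : ℝ)| = (-1) ^ (k + 1) * bernoulli (2 * k) := by
  rw [← abs_of_pos (neg_one_pow_mul_bernoulli_pos hk), abs_mul, abs_pow, abs_neg, abs_one, one_pow,
    one_mul]

lemma abs_bernoulli_two_mul_pos {k : ℕ} (hk : k ≠ 0) : 0 < |(bernoulli (2 * k) : ℝ)| := by
  rw [abs_bernoulli_two_mul hk]
  exact neg_one_pow_mul_bernoulli_pos hk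

lemma neg_one_pow_mul_bernoulli_two_mul_add_four (m : ℕ) :
    (-1) ^ (m + 1) * (bernoulli (2 * m + 4) : ℝ) = |(bernoulli (2 * m + 4) : ℝ)| := by
  rw [show 2 * m + 4 = 2 * (m + 2) by ring, abs_bernoulli_two_mul (by omega)]
  ring

lemma neg_one_pow_mul_bernoulli_two_mul_add_two (m : ℕ) :
    (-1) ^ (m + 1) * (bernoulli (2 * m + 2) : ℝ) = -|(bernoulli (2 * m + 2) : ℝ)| := by
  rw [show 2 * m + 2 = 2 * (m + 1) by ring, abs_bernoulli_two_mul (by omega)]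
  ring

lemma two_div_two_pow_le {j : ℕ} (hj : 4 ≤ j) : (2 : ℝ) / 2 ^ j ≤ 1 / 8 := by
  rw [div_le_div_iff₀ (by positivity) (by norm_num), one_mul]
  calc (2 : ℝ) * 8 = 2 ^ 4 := by norm_num
    _ ≤ 2 ^ j := pow_le_pow_right₀ one_le_two hj

/-- For `m = 0` this is `24 / 30 < 1`; for `m ≥ 1` it follows from `ζ(2m + 4) ≤ ζ(2m + 2)` and
`π² > 9`. -/
lemma abs_bernoulli_two_mul_add_four_lt (m : ℕ) :
    24 * |(bernoulli (2 * m + 4) : ℝ)| <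
      (2 * m + 4) * (2 * m + 3) * (1 - 2 / 2 ^ (2 * m + 2)) * |(bernoulli (2 * m + 2) : ℝ)| := by
  rcases m.eq_zero_or_pos with rfl | hm
  · rw [bernoulli_eq_bernoulli'_of_ne_one (by norm_num), bernoulli'_four]
    norm_num [bernoulli_two]
  rw [show 2 * m + 4 = 2 * (m + 1) + 2 by ring, show 2 * m + 2 = 2 * (m + 1) by ring,
    abs_bernoulli_two_mul (by omega), neg_one_pow_mul_bernoulli_eq_tsum (by omega),
    show 2 * (m + 1) + 2 = 2 * (m + 2) by ring, abs_bernoulli_two_mul (by omega),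
    neg_one_pow_mul_bernoulli_eq_tsum (by omega), show 2 * (m + 2) = 2 * (m + 1) + 2 by ring,
    pow_add]
  set Z := ∑' n : ℕ, 1 / (n : ℝ) ^ (2 * (m + 1))
  set Z' := ∑' n : ℕ, 1 / (n : ℝ) ^ (2 * (m + 1) + 2)
  have hZ'Z : Z' ≤ Z := tsum_one_div_nat_pow_le (by omega) (by omega)
  have hZ : 0 < Z := one_pos.trans_le (one_le_tsum_one_div_nat_pow (by omega))
  have hτ := two_div_two_pow_le (j := 2 * (m + 1)) (by omega)
  have hπ : 9 < π ^ 2 := by nlinarith [pi_gt_three]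
  have hζ : 6 * Z' / π ^ 2 < (1 - 2 / 2 ^ (2 * (m + 1))) * Z := by
    rw [div_lt_iff₀ (by positivity)]
    nlinarith [mul_le_mul_of_nonneg_right (mul_le_mul_of_nonneg_right hτ hZ.le) (sq_nonneg π)]
  have hfac : ((2 * (m + 1) + 2)! : ℝ) = (2 * m + 4) * (2 * m + 3) * (2 * (m + 1))! := by
    rw [Nat.factorial_succ, Nat.factorial_succ]
    push_cast
    ring
  have hF : 0 < (2 * m + 4) * (2 * m + 3) * (2 * (2 * (m + 1))! / (2 * π) ^ (2 * (m + 1))) := by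
    have := pi_pos
    positivity
  rw [hfac]
  calc _ = (2 * m + 4) * (2 * m + 3) * (2 * (2 * (m + 1))! / (2 * π) ^ (2 * (m + 1))) *
        (6 * Z' / π ^ 2) := by
        field_simp
        ring
    _ < _ := (mul_lt_mul_of_pos_left hζ hF).trans_eq (by ring)

lemma mul_bernoulliFun_three_lt_neg_one_pow_mul_bernoulliFun (m : ℕ) {x : ℝ}
    (hx : x ∈ Ioo 0 2⁻¹) :
    2 * (2 * m + 5) * |(bernoulli (2 * m + 4) : ℝ)| * bernoulliFun 3 x <
      (-1) ^ (m + 1) * bernoulliFun (2 * m + 5) x := by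
  have hc2 := neg_one_pow_mul_bernoulli_two_mul_add_four m
  have hc1 := neg_one_pow_mul_bernoulli_two_mul_add_two m
  have hc2pos : 0 < |(bernoulli (2 * m + 4) : ℝ)| :=
    abs_bernoulli_two_mul_pos (k := m + 2) (by omega)
  have h7 := abs_bernoulli_two_mul_add_four_lt m
  have h5 : bernoulli (2 * m + 5) = 0 := bernoulli_eq_zero_of_odd ⟨m + 2, by ring⟩ (by omega)
  have h3 : bernoulli (2 * m + 3) = 0 := bernoulli_eq_zero_of_odd ⟨m + 1, by ring⟩ (by omega)
  have h3' : bernoulli 3 = 0 := bernoulli_eq_zero_of_odd ⟨1, by ring⟩ (by omega)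
  set K : ℝ := 2 * (2 * m + 5) * |(bernoulli (2 * m + 4) : ℝ)|
  have hK : 0 < K := by positivity
  suffices 0 < (-1) ^ (m + 1) * bernoulliFun (2 * m + 5) x - K * bernoulliFun 3 x by linarith
  refine pos_of_iteratedDeriv_four_pos
    (f := fun y => (-1) ^ (m + 1) * bernoulliFun (2 * m + 5) y - K * bernoulliFun 3 y) ?smooth
    (by norm_num) ?h4 ?h3a ?h3b ?h2a ?h2b ?h1 ?ha ?hb hx
  case smooth =>
    exact ((contDiff_const.mul (contDiff_bernoulliFun _)).sub
      (contDiff_const.mul (contDiff_bernoulliFun _))).of_le le_top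
  all_goals simp only [← iteratedDeriv_one, iteratedDeriv_const_mul_bernoulliFun_sub, mem_Ioo,
    Nat.descFactorial_succ, Nat.descFactorial_zero, Nat.sub_zero, Nat.sub_self, Nat.reduceSubDiff,
    bernoulliFun_eval_zero, bernoulliFun_eval_half, bernoulli_zero, bernoulli_one, bernoulli_two,
    h5, h3, h3']
  all_goals push_cast
  case h4 =>
    intro y hy
    linear_combination (2 * m + 2) * (2 * m + 3) * (2 * m + 4) * (2 * m + 5) *
      neg_one_pow_mul_bernoulliFun_pos m hy
  case h3a =>
    linear_combination (2 * m + 3) * (2 * m + 4) * (2 * m + 5) * hc1 + 6 * hK +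
      (2 * m + 3) * (2 * m + 4) * (2 * m + 5) * abs_nonneg (bernoulli (2 * m + 2) : ℝ)
  case h3b =>
    linear_combination (2 * m + 5) * h7 + 6 * hK -
      (2 * m + 3) * (2 * m + 4) * (2 * m + 5) * (2 / 2 ^ (2 * m + 2) - 1) * hc1
  case h2a => linear_combination 3 * hK
  case h1 => linear_combination (2 * m + 5) * hc2
  case h2b | ha | hb => ring

lemma neg_one_pow_mul_bernoulliFun_lt_mul_bernoulliFun_three (m : ℕ) {x : ℝ}
    (hx : x ∈ Ioo 0 2⁻¹) :
    (-1) ^ (m + 1) * bernoulliFun (2 * m + 5) x <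
      4 * (1 - 2 / 2 ^ (2 * m + 4)) * (2 * m + 5) * |(bernoulli (2 * m + 4) : ℝ)| *
        bernoulliFun 3 x := by
  have hc2 := neg_one_pow_mul_bernoulli_two_mul_add_four m
  have hc1 := neg_one_pow_mul_bernoulli_two_mul_add_two m
  have hc2pos : 0 < |(bernoulli (2 * m + 4) : ℝ)| :=
    abs_bernoulli_two_mul_pos (k := m + 2) (by omega)
  have h7 := abs_bernoulli_two_mul_add_four_lt m
  have h5 : bernoulli (2 * m + 5) = 0 := bernoulli_eq_zero_of_odd ⟨m + 2, by ring⟩ (by omega)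
  have h3 : bernoulli (2 * m + 3) = 0 := bernoulli_eq_zero_of_odd ⟨m + 1, by ring⟩ (by omega)
  have h3' : bernoulli 3 = 0 := bernoulli_eq_zero_of_odd ⟨1, by ring⟩ (by omega)
  have hτ := two_div_two_pow_le (j := 2 * m + 4) (by omega)
  have hτc2 : 0 < 2 / 2 ^ (2 * m + 4) * |(bernoulli (2 * m + 4) : ℝ)| := by positivity
  set K : ℝ := 4 * (1 - 2 / 2 ^ (2 * m + 4)) * (2 * m + 5) * |(bernoulli (2 * m + 4) : ℝ)|
  have hK : 0 < K := mul_pos (mul_pos (mul_pos four_pos (by linarith)) (by positivity)) hc2pos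
  suffices 0 < K * bernoulliFun 3 x - (-1) ^ (m + 1) * bernoulliFun (2 * m + 5) x by linarith
  refine pos_of_iteratedDeriv_four_neg
    (f := fun y => K * bernoulliFun 3 y - (-1) ^ (m + 1) * bernoulliFun (2 * m + 5) y) ?smooth
    (by norm_num) ?h4 ?h3a ?h3b ?h2a ?h2b ?h1 ?ha ?hb hx
  case smooth =>
    exact ((contDiff_const.mul (contDiff_bernoulliFun _)).sub
      (contDiff_const.mul (contDiff_bernoulliFun _))).of_le le_top
  all_goals simp only [← iteratedDeriv_one, iteratedDeriv_const_mul_bernoulliFun_sub, mem_Ioo,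
    Nat.descFactorial_succ, Nat.descFactorial_zero, Nat.sub_zero, Nat.sub_self, Nat.reduceSubDiff,
    bernoulliFun_eval_zero, bernoulliFun_eval_half, bernoulli_zero, bernoulli_one, bernoulli_two,
    h5, h3, h3']
  all_goals push_cast
  case h4 =>
    intro y hy
    linear_combination (2 * m + 2) * (2 * m + 3) * (2 * m + 4) * (2 * m + 5) *
      neg_one_pow_mul_bernoulliFun_pos m hy
  case h3a =>
    linear_combination 6 * hK + (2 * m + 3) * (2 * m + 4) * (2 * m + 5) * hc1 +
      (2 * m + 3) * (2 * m + 4) * (2 * m + 5) * abs_nonneg (bernoulli (2 * m + 2) : ℝ)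
  case h3b =>
    linear_combination (2 * m + 5) * h7 + 24 * (2 * m + 5) * hτc2 -
      (2 * m + 3) * (2 * m + 4) * (2 * m + 5) * (2 / 2 ^ (2 * m + 2) - 1) * hc1
  case h2a => linear_combination 3 * hK
  case h1 => linear_combination (2 * m + 5) * (1 - 2 / 2 ^ (2 * m + 4)) * hc2
  case h2b | ha | hb => ring

theorem stmt9 (n : ℕ) (hn : 2 ≤ n) (t : ℝ) (ht : 0 < t) (ht2 : t < 1/2) :
    2 * (2*n+1 : ℝ) * |Bnum (2*n)| < |B (2*n+1) t| / (t * (1/2 - t) * (1 - t)) ∧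
    |B (2*n+1) t| / (t * (1/2 - t) * (1 - t)) <
      4 * (1 - 1/(2:ℝ)^(2*n-1)) * (2*n+1 : ℝ) * |Bnum (2*n)| := by
  obtain ⟨m, rfl⟩ : ∃ m, n = m + 2 := ⟨n - 2, by omega⟩
  have hx : t ∈ Ioo (0 : ℝ) 2⁻¹ := ⟨ht, by rwa [← one_div]⟩
  have hD : 0 < t * (1 / 2 - t) * (1 - t) := mul_pos (mul_pos ht (by linarith)) (by linarith)
  have habs : |bernoulliFun (2 * m + 5) t| = (-1) ^ (m + 1) * bernoulliFun (2 * m + 5) t := by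
    have := neg_one_pow_mul_bernoulliFun_pos (m + 2) hx
    rw [show 2 * (m + 2) + 1 = 2 * m + 5 by ring, show (-1 : ℝ) ^ (m + 2 + 1) = (-1) ^ (m + 1) by
      ring] at this
    rw [← abs_of_pos this, abs_mul, abs_pow, abs_neg, abs_one, one_pow, one_mul]
  have hpow : 1 / (2 : ℝ) ^ (2 * m + 3) = 2 / 2 ^ (2 * m + 4) := by
    field_simp
    ring
  have lower := mul_bernoulliFun_three_lt_neg_one_pow_mul_bernoulliFun m hx
  have upper := neg_one_pow_mul_bernoulliFun_lt_mul_bernoulliFun_three m hx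
  rw [bernoulliFun_three] at lower upper
  rw [show 2 * (m + 2) - 1 = 2 * m + 3 by omega, show 2 * (m + 2) = 2 * m + 4 by ring, Bnum,
    B_eq_bernoulliFun, habs, hpow]
  push_cast
  constructor
  · rw [lt_div_iff₀ hD]
    linarith
  · rw [div_lt_iff₀ hD]
    linarith
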